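/- Let a, b, c, d be nonnegative reals with ad ≤ bc, and let f, g be real-rooted polynomials with nonnegative coefficients such that g interlaces f. Then a·g + b·f interlaces x·(c·g + d·f), provided both are nonzero. -/

import Mathlib

open Polynomial Finset

/-- A real polynomial has only real roots: the number of real roots
(with multiplicity) equals its degree. (The zero polynomial counts.) -/
def RealRooted (p : Polynomial ℝ) : Prop :=
  p.roots.card = p.natDegree

/-- The list of real roots of `p`, sorted in increasing order. -/
noncomputable def rootList (p : Polynomial ℝ) : List ℝ :=
  p.roots.sort (· ≤ ·)

/-- `Interlaces g f` means `g ≼ f`: both are real-rooted with positive leading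
coefficients, `deg f ∈ {deg g, deg g + 1}`, and the roots alternate
(`v_n ≤ u_n ≤ v_{n-1} ≤ ⋯ ≤ v_1 ≤ u_1`, resp. `u_n ≤ v_{n-1} ≤ ⋯ ≤ v_1 ≤ u_1`,
indexed in decreasing order). The zero polynomial interlaces and is
interlaced by everything, by convention. -/
def Interlaces (g f : Polynomial ℝ) : Prop :=
  g = 0 ∨ f = 0 ∨
    (RealRooted f ∧ RealRooted g ∧ 0 < f.leadingCoeff ∧ 0 < g.leadingCoeff ∧
      ((f.natDegree = g.natDegree ∧
          (∀ i < f.natDegree, (rootList g).getD i 0 ≤ (rootList f).getD i 0) ∧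
          (∀ i, i + 1 < f.natDegree →
            (rootList f).getD i 0 ≤ (rootList g).getD (i + 1) 0)) ∨
       (f.natDegree = g.natDegree + 1 ∧
          (∀ i < g.natDegree, (rootList f).getD i 0 ≤ (rootList g).getD i 0) ∧
          (∀ i, i + 1 < f.natDegree →
            (rootList g).getD i 0 ≤ (rootList f).getD (i + 1) 0))))

/-- All coefficients of `p` are nonnegative. -/
def NonnegCoeffs (p : Polynomial ℝ) : Prop :=
  ∀ k, 0 ≤ p.coeff k


/-!
In terms of root counts, `g ≼ f` says that above every `t` the polynomial `f` has as many roots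
as `g` or one more. The heart of the matter is that `g ≼ α g + β f ≼ f` for `α, β ≥ 0`. Common
roots of `f` and `g` split off as a common factor; once they are gone, the roots of `g` and `f`
strictly alternate, `α g + β f` has opposite signs at each root of `g` and the next root of `f`
(when `deg f = deg g + 1`, the smallest root of `f` is paired with a point far to the left,
where `α g + β f` has the sign of its leading term), and the intermediate value theorem puts one
root of `α g + β f` in each of these `deg f` disjoint gaps.

For `c > 0`, `a g + b f = (a / c) (c g + d f) + ((b c - a d) / c) f`, so applying this twice
(first to `g ≼ f`, then to `c g + d f ≼ f`) gives `c g + d f ≼ a g + b f` when `a d ≤ b c`.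
Finally `r ≼ p` implies `p ≼ X r` as soon as the roots of `p` are nonpositive, which nonnegative
coefficients guarantee.
-/

section Counting

variable {a b : ℕ → ℝ} {n na nb k : ℕ}

lemma le_iff_lt_card_filter_le (ha : MonotoneOn a (Set.Iio n)) {i : ℕ} (hi : i < n) (t : ℝ) :
    a i ≤ t ↔ i < #{j ∈ range n | a j ≤ t} := by
  constructor
  · intro h
    calc i < #(range (i + 1)) := by simp
      _ ≤ _ := card_le_card fun j hj => by
        simp only [mem_range, mem_filter] at hj ⊢
        exact ⟨by omega, (ha (by simp; omega) (by simpa using hi) (by omega)).trans h⟩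
  · intro h
    by_contra! hti
    have : #{j ∈ range n | a j ≤ t} ≤ #(range i) := card_le_card fun j hj => by
      simp only [mem_range, mem_filter] at hj ⊢
      by_contra! hij
      exact (hti.trans_le (ha (by simpa using hi) (by simpa using hj.1) hij)).not_ge hj.2
    simp at this
    omega

lemma le_shift_of_card_filter_le (ha : MonotoneOn a (Set.Iio na))
    (hb : MonotoneOn b (Set.Iio nb))
    (h : ∀ t, #{j ∈ range nb | b j ≤ t} ≤ #{j ∈ range na | a j ≤ t} + k)
    {i : ℕ} (hi : i + k < nb) : a i ≤ b (i + k) := by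
  have hb' := (le_iff_lt_card_filter_le hb hi (b (i + k))).1 le_rfl
  have hle := h (b (i + k))
  have hna : #{j ∈ range na | a j ≤ b (i + k)} ≤ na :=
    (card_filter_le _ _).trans (card_range na).le
  exact (le_iff_lt_card_filter_le ha (by omega) _).2 (by omega)

lemma card_filter_le_of_le_shift (ha : MonotoneOn a (Set.Iio na))
    (hb : MonotoneOn b (Set.Iio nb)) (hlen : nb ≤ na + k)
    (h : ∀ i, i + k < nb → a i ≤ b (i + k)) (t : ℝ) :
    #{j ∈ range nb | b j ≤ t} ≤ #{j ∈ range na | a j ≤ t} + k := by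
  set K := #{j ∈ range nb | b j ≤ t}
  by_contra! hK
  have hKn : K ≤ nb := (card_filter_le _ _).trans (card_range nb).le
  have hbt : b (K - 1) ≤ t := (le_iff_lt_card_filter_le hb (by omega) t).2 (by omega)
  have hat : a (K - 1 - k) ≤ t :=
    (h (K - 1 - k) (by omega)).trans (by rwa [show K - 1 - k + k = K - 1 by omega])
  have := (le_iff_lt_card_filter_le ha (by omega) t).1 hat
  omega

lemma card_filter_lt_eq_sub {t : ℝ} (hlo : ∀ j < k, a j ≤ t)
    (hhi : ∀ j, k ≤ j → j < n → t < a j) : #{j ∈ range n | t < a j} = n - k := by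
  have : {j ∈ range n | t < a j} = Ico k n := by
    ext j
    simp only [mem_filter, mem_range, mem_Ico]
    constructor
    · rintro ⟨hjn, htj⟩
      exact ⟨by by_contra! hjk; exact (hlo j hjk).not_gt htj, hjn⟩
    · rintro ⟨hkj, hjn⟩
      exact ⟨hjn, hhi j hkj hjn⟩
  rw [this, Nat.card_Ico]

lemma card_filter_lt_le_of_le_shift (hlen : na + k ≤ nb) (h : ∀ i < na, a i ≤ b (i + k))
    (t : ℝ) : #{j ∈ range na | t < a j} ≤ #{j ∈ range nb | t < b j} :=
  card_le_card_of_injOn (· + k)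
    (fun j hj => by
      simp only [coe_filter, mem_range, Set.mem_ofPred_eq] at hj ⊢
      exact ⟨by omega, hj.2.trans_le (h j hj.1)⟩)
    (fun i _ j _ hij => by simpa using hij)

end Counting

lemma Multiset.exists_lt_forall_mem (s : Multiset ℝ) : ∃ t, ∀ x ∈ s, t < x := by
  obtain ⟨M, hM⟩ := (s.map Neg.neg).toFinset.exists_le
  exact ⟨-M - 1, fun x hx => by
    have := hM (-x) (by simpa using hx)
    linarith⟩

noncomputable def rootsAbove (p : ℝ[X]) (t : ℝ) : ℕ := p.roots.countP (t < ·)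

def RootsInterlace (g f : ℝ[X]) : Prop :=
  ∀ t, rootsAbove g t ≤ rootsAbove f t ∧ rootsAbove f t ≤ rootsAbove g t + 1

def RootsBetween (g p f : ℝ[X]) : Prop :=
  ∀ t, rootsAbove g t ≤ rootsAbove p t ∧ rootsAbove p t ≤ rootsAbove f t

/-- Indexed from `0` in increasing order, with junk value `0` past the last root. -/
noncomputable def rootAt (p : ℝ[X]) (i : ℕ) : ℝ := (rootList p).getD i 0

namespace RealRooted

variable {p : ℝ[X]}

lemma length_rootList (hp : RealRooted p) : (rootList p).length = p.natDegree := by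
  rw [rootList, Multiset.length_sort]
  exact hp

lemma monotoneOn_rootAt (hp : RealRooted p) : MonotoneOn (rootAt p) (Set.Iio p.natDegree) := by
  intro i hi j hj hij
  rw [← hp.length_rootList] at hi hj
  simp only [rootAt, List.getD_eq_getElem _ _ hi, List.getD_eq_getElem _ _ hj]
  exact (List.sortedLE_iff_pairwise.2 (Multiset.pairwise_sort p.roots (· ≤ ·)) :)
    (show (⟨i, hi⟩ : Fin _) ≤ ⟨j, hj⟩ from hij)

lemma roots_eq_map_range (hp : RealRooted p) :
    p.roots = (Multiset.range p.natDegree).map (rootAt p) := by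
  have hL : (List.range (rootList p).length).map (rootAt p) = rootList p :=
    List.ext_getElem (by simp) fun i h₁ h₂ => by simp [rootAt, List.getElem?_eq_getElem h₂]
  rw [← hp.length_rootList, Multiset.range, Multiset.map_coe]
  exact (Multiset.sort_eq _ _).symm.trans (congrArg _ hL.symm)

lemma rootAt_mem_roots (hp : RealRooted p) {i : ℕ} (hi : i < p.natDegree) :
    rootAt p i ∈ p.roots := by
  rw [hp.roots_eq_map_range]
  exact Multiset.mem_map_of_mem _ (Multiset.mem_range.2 hi)

lemma rootsAbove_eq (hp : RealRooted p) (t : ℝ) :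
    rootsAbove p t = #{i ∈ range p.natDegree | t < rootAt p i} := by
  rw [rootsAbove, hp.roots_eq_map_range, Multiset.countP_map]
  rfl

lemma card_filter_le_add_rootsAbove (hp : RealRooted p) (t : ℝ) :
    #{i ∈ range p.natDegree | rootAt p i ≤ t} + rootsAbove p t = p.natDegree := by
  rw [hp.rootsAbove_eq]
  simpa only [not_le, card_range] using
    card_filter_add_card_filter_not (s := range p.natDegree) (fun i => rootAt p i ≤ t)

end RealRooted

lemma RootsInterlace.natDegree_le {f g : ℝ[X]} (h : RootsInterlace g f) (hf : RealRooted f)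
    (hg : RealRooted g) : g.natDegree ≤ f.natDegree ∧ f.natDegree ≤ g.natDegree + 1 := by
  obtain ⟨t, ht⟩ := (f.roots + g.roots).exists_lt_forall_mem
  have hcard : ∀ p : ℝ[X], (∀ x ∈ p.roots, t < x) → RealRooted p → rootsAbove p t = p.natDegree :=
    fun p hp hr => (Multiset.countP_eq_card.2 hp).trans hr
  rw [← hcard f (fun x hx => ht x (Multiset.mem_add.2 (.inl hx))) hf,
    ← hcard g (fun x hx => ht x (Multiset.mem_add.2 (.inr hx))) hg]
  exact h t

theorem interlaces_iff_rootsInterlace {f g : ℝ[X]} (hf : f ≠ 0) (hg : g ≠ 0) :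
    Interlaces g f ↔ RealRooted f ∧ RealRooted g ∧ 0 < f.leadingCoeff ∧
      0 < g.leadingCoeff ∧ RootsInterlace g f := by
  simp only [Interlaces, hf, hg, false_or]
  refine and_congr_right fun hfr => and_congr_right fun hgr =>
    and_congr_right fun _ => and_congr_right fun _ => ?_
  have hu := hfr.monotoneOn_rootAt
  have hv := hgr.monotoneOn_rootAt
  have hfa := hfr.card_filter_le_add_rootsAbove
  have hga := hgr.card_filter_le_add_rootsAbove
  constructor
  · rintro (⟨hdeg, h₁, h₂⟩ | ⟨hdeg, h₁, h₂⟩) t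
    · have c₁ := card_filter_le_of_le_shift hv hu (k := 0) (by omega) (fun i hi => h₁ i hi) t
      have c₂ := card_filter_le_of_le_shift hu hv (k := 1) (by omega)
        (fun i hi => h₂ i (by omega)) t
      have := hfa t
      have := hga t
      constructor <;> omega
    · have c₁ := card_filter_le_of_le_shift hu hv (k := 0) (by omega) (fun i hi => h₁ i hi) t
      have c₂ := card_filter_le_of_le_shift hv hu (k := 1) (by omega)
        (fun i hi => h₂ i (by omega)) t
      have := hfa t
      have := hga t
      constructor <;> omega
  · intro h
    have hdeg := h.natDegree_le hfr hgr
    have hcounts := fun t => And.intro (h t) (And.intro (hfa t) (hga t))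
    obtain hdeg' | hdeg' : f.natDegree = g.natDegree ∨ f.natDegree = g.natDegree + 1 := by omega
    · refine .inl ⟨hdeg', fun i hi => le_shift_of_card_filter_le hv hu (k := 0)
        (fun t => ?_) hi, fun i hi => le_shift_of_card_filter_le hu hv (k := 1)
        (fun t => ?_) (by omega)⟩ <;> have := hcounts t <;> omega
    · refine .inr ⟨hdeg', fun i hi => le_shift_of_card_filter_le hu hv (k := 0)
        (fun t => ?_) hi, fun i hi => le_shift_of_card_filter_le hv hu (k := 1)
        (fun t => ?_) (by omega)⟩ <;> have := hcounts t <;> omega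

lemma realRooted_zero : RealRooted 0 := by simp [RealRooted]

lemma RealRooted.smul {p : ℝ[X]} (hp : RealRooted p) (c : ℝ) : RealRooted (c • p) := by
  rcases eq_or_ne c 0 with rfl | hc
  · rw [zero_smul]
    exact realRooted_zero
  · rw [RealRooted, roots_smul_nonzero _ hc, natDegree_smul _ hc]
    exact hp

lemma rootsAbove_smul (p : ℝ[X]) {c : ℝ} (hc : c ≠ 0) : rootsAbove (c • p) = rootsAbove p := by
  ext t
  rw [rootsAbove, rootsAbove, roots_smul_nonzero _ hc]

lemma leadingCoeff_real_smul (p : ℝ[X]) (c : ℝ) : (c • p).leadingCoeff = c * p.leadingCoeff := by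
  rw [smul_eq_C_mul, leadingCoeff_mul, leadingCoeff_C]

lemma interlaces_self {f : ℝ[X]} (hf : RealRooted f) (hlc : 0 ≤ f.leadingCoeff) :
    Interlaces f f := by
  rcases eq_or_ne f 0 with rfl | hf₀
  · exact .inl rfl
  have hlc' := hlc.lt_of_ne' (leadingCoeff_ne_zero.2 hf₀)
  exact (interlaces_iff_rootsInterlace hf₀ hf₀).2
    ⟨hf, hf, hlc', hlc', fun _ => ⟨le_rfl, Nat.le_succ _⟩⟩

lemma Interlaces.smul {f g : ℝ[X]} (h : Interlaces g f) {c d : ℝ} (hc : 0 ≤ c) (hd : 0 ≤ d) :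
    Interlaces (c • g) (d • f) := by
  rcases hc.eq_or_lt with rfl | hc
  · exact .inl (zero_smul _ _)
  rcases hd.eq_or_lt with rfl | hd
  · exact .inr (.inl (zero_smul _ _))
  rcases eq_or_ne g 0 with rfl | hg
  · exact .inl (smul_zero _)
  rcases eq_or_ne f 0 with rfl | hf
  · exact .inr (.inl (smul_zero _))
  obtain ⟨hfr, hgr, hflc, hglc, hfg⟩ := (interlaces_iff_rootsInterlace hf hg).1 h
  refine (interlaces_iff_rootsInterlace (smul_ne_zero hd.ne' hf) (smul_ne_zero hc.ne' hg)).2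
    ⟨hfr.smul d, hgr.smul c, ?_, ?_, ?_⟩
  · rw [leadingCoeff_real_smul]; positivity
  · rw [leadingCoeff_real_smul]; positivity
  · rwa [RootsInterlace, rootsAbove_smul _ hc.ne', rootsAbove_smul _ hd.ne']

lemma neg_one_pow_countP_mul_eval_prod_pos (s : Multiset ℝ) {x : ℝ} (hx : x ∉ s) :
    0 < (-1) ^ s.countP (x < ·) * ((s.map fun a => X - C a).prod).eval x := by
  induction s using Multiset.induction_on with
  | empty => simp
  | cons a s ih =>
    rw [Multiset.mem_cons, not_or] at hx
    have hs := ih hx.2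
    rw [Multiset.countP_cons, Multiset.map_cons, Multiset.prod_cons, eval_mul, eval_sub, eval_X,
      eval_C]
    rcases Ne.lt_or_gt hx.1 with h | h
    · rw [if_pos h, pow_succ]
      nlinarith
    · rw [if_neg h.not_gt, add_zero]
      nlinarith

lemma RealRooted.neg_one_pow_mul_eval_pos {p : ℝ[X]} (hp : RealRooted p)
    (hlc : 0 < p.leadingCoeff) {x : ℝ} (hx : x ∉ p.roots) :
    0 < (-1) ^ rootsAbove p x * p.eval x := by
  have hev : p.eval x = p.leadingCoeff * ((p.roots.map fun a => X - C a).prod).eval x := by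
    conv_lhs => rw [← C_leadingCoeff_mul_prod_multiset_X_sub_C hp]
    rw [eval_mul, eval_C]
  rw [hev, mul_left_comm]
  exact mul_pos hlc (neg_one_pow_countP_mul_eval_prod_pos _ hx)

lemma mul_neg_of_neg_one_pow_succ_mul_pos {x y : ℝ} {k : ℕ} (hx : 0 < (-1) ^ (k + 1) * x)
    (hy : 0 < (-1) ^ k * y) : x * y < 0 := by
  have hk : (-1 : ℝ) ^ k * (-1) ^ k = 1 := by rw [← pow_add, ← two_mul, pow_mul]; simp
  have hxy := mul_pos hx hy
  rw [show (-1) ^ (k + 1) * x * ((-1) ^ k * y) = -(x * y) * ((-1) ^ k * (-1) ^ k) by ring,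
    hk] at hxy
  linarith

lemma leadingCoeff_add_pos {p q : ℝ[X]} (hp : 0 < p.leadingCoeff) (hq : 0 ≤ q.leadingCoeff) :
    0 < (p + q).leadingCoeff := by
  rcases lt_trichotomy p.degree q.degree with h | h | h
  · have hq₀ : q ≠ 0 := by rintro rfl; exact not_lt_bot (h.trans_eq degree_zero)
    rw [leadingCoeff_add_of_degree_lt h]
    exact hq.lt_of_ne' (leadingCoeff_ne_zero.2 hq₀)
  · rw [leadingCoeff_add_of_degree_eq h (by positivity)]
    positivity
  · rwa [leadingCoeff_add_of_degree_lt' h]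

lemma leadingCoeff_smul_add_smul_pos {f g : ℝ[X]} (hflc : 0 ≤ f.leadingCoeff)
    (hglc : 0 < g.leadingCoeff) {α β : ℝ} (hα : 0 < α) (hβ : 0 ≤ β) :
    0 < (α • g + β • f).leadingCoeff :=
  leadingCoeff_add_pos (by rw [leadingCoeff_real_smul]; positivity)
    (by rw [leadingCoeff_real_smul]; positivity)

lemma exists_lt_neg_one_pow_mul_eval_pos {P : ℝ[X]} (hlc : 0 < P.leadingCoeff)
    (hdeg : 0 < P.natDegree) (M : ℝ) : ∃ T < M, 0 < (-1) ^ P.natDegree * P.eval T := by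
  set Q := C ((-1) ^ P.natDegree) * P.comp (-X)
  have hQ : ∀ y, Q.eval y = (-1) ^ P.natDegree * P.eval (-y) := by simp [Q]
  have hQlc : Q.leadingCoeff = P.leadingCoeff := by
    rw [leadingCoeff_mul, leadingCoeff_C, comp_neg_X_leadingCoeff_eq, ← mul_assoc, ← pow_add,
      Even.neg_one_pow ⟨_, rfl⟩, one_mul]
  have hQdeg : 0 < Q.degree := by
    rw [← natDegree_pos_iff_degree_pos, natDegree_C_mul (by simp), natDegree_comp]
    simpa using hdeg
  obtain ⟨y, hy, hyM⟩ := (((tendsto_atTop_of_leadingCoeff_nonneg Q hQdeg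
    (hQlc ▸ hlc.le)).eventually_gt_atTop 0).and (Filter.eventually_gt_atTop (-M))).exists
  exact ⟨-y, by linarith, by rwa [← hQ]⟩

lemma roots_eq_map_range_of_sign_changes {P : ℝ[X]} {n : ℕ} (hP : P.natDegree ≤ n)
    {l r : ℕ → ℝ} (hlr : ∀ i < n, l i < r i) (hrl : ∀ i, i + 1 < n → r i < l (i + 1))
    (hsign : ∀ i < n, P.eval (l i) * P.eval (r i) < 0) :
    ∃ w : ℕ → ℝ, (∀ i < n, l i < w i ∧ w i < r i) ∧ P.roots = (Multiset.range n).map w := by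
  have hroot : ∀ i, ∃ x, i < n → (l i < x ∧ x < r i) ∧ P.IsRoot x := by
    intro i
    by_cases hi : i < n
    · have hcont := P.continuous.continuousOn (s := Set.Icc (l i) (r i))
      obtain ⟨x, hx, hPx⟩ : ∃ x ∈ Set.Ioo (l i) (r i), P.eval x = 0 := by
        rcases mul_neg_iff.1 (hsign i hi) with h | h
        · exact intermediate_value_Ioo' (hlr i hi).le hcont ⟨h.2, h.1⟩
        · exact intermediate_value_Ioo (hlr i hi).le hcont ⟨h.1, h.2⟩
      exact ⟨x, fun _ => ⟨hx, hPx⟩⟩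
    · exact ⟨0, fun h => absurd h hi⟩
  choose w hw using hroot
  have hrl' : ∀ i j, i < j → j < n → r i < l j := by
    intro i j hij hjn
    induction j, hij using Nat.le_induction with
    | base => exact hrl i hjn
    | succ j hij ih => exact (ih (by omega)).trans ((hlr j (by omega)).trans (hrl j hjn))
  have hmono : ∀ i j, i < j → j < n → w i < w j := fun i j hij hjn =>
    ((hw i (by omega)).1.2.trans (hrl' i j hij hjn)).trans (hw j hjn).1.1
  have hnodup : ((Multiset.range n).map w).Nodup := by
    refine (Multiset.nodup_range n).map_on fun i hi j hj hij => ?_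
    rw [Multiset.mem_range] at hi hj
    by_contra hne
    rcases Nat.lt_or_gt_of_ne hne with h | h
    · exact (hmono i j h hj).ne hij
    · exact (hmono j i h hi).ne' hij
  refine ⟨w, fun i hi => (hw i hi).1, (Multiset.eq_of_le_of_card_le ?_ ?_).symm⟩
  · refine (Multiset.le_iff_subset hnodup).2 fun x hx => ?_
    obtain ⟨i, hi, rfl⟩ := Multiset.mem_map.1 hx
    rw [Multiset.mem_range] at hi
    have hP₀ : P ≠ 0 := by
      rintro rfl
      simpa using hsign i hi
    exact (mem_roots hP₀).2 (hw i hi).2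
  · simpa using (card_roots' P).trans hP

section Combination

variable {f g : ℝ[X]} {α β : ℝ}

lemma RealRooted.neg_one_pow_mul_eval_smul_add_smul_pos (hfr : RealRooted f)
    (hflc : 0 < f.leadingCoeff) (hβ : 0 < β) {x : ℝ} (hgx : g.IsRoot x) (hfx : x ∉ f.roots)
    (α : ℝ) : 0 < (-1) ^ rootsAbove f x * (α • g + β • f).eval x := by
  rw [eval_add, eval_smul, eval_smul, hgx.eq_zero, smul_zero, zero_add, smul_eq_mul,
    mul_left_comm]
  exact mul_pos hβ (hfr.neg_one_pow_mul_eval_pos hflc hfx)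

lemma realRooted_smul_add_smul_of_alternating (hfr : RealRooted f) (hgr : RealRooted g)
    (hglc : 0 < g.leadingCoeff) (hdisj : ∀ x ∈ f.roots, x ∉ g.roots) (hα : 0 < α)
    (hdeg : (α • g + β • f).natDegree ≤ f.natDegree) {l : ℕ → ℝ}
    (hlu : ∀ i < f.natDegree, l i < rootAt f i)
    (hul : ∀ i, i + 1 < f.natDegree → rootAt f i < l (i + 1))
    (hl : ∀ i < f.natDegree, 0 < (-1) ^ (f.natDegree - i) * (α • g + β • f).eval (l i))
    (hgu : ∀ i < f.natDegree, rootsAbove g (rootAt f i) = f.natDegree - i - 1)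
    (hgl : ∀ t, rootsAbove g t ≤ #{i ∈ range f.natDegree | t < l i}) :
    RealRooted (α • g + β • f) ∧ RootsBetween g (α • g + β • f) f := by
  set n := f.natDegree
  set P := α • g + β • f
  have hr : ∀ i < n, 0 < (-1) ^ (n - i - 1) * P.eval (rootAt f i) := fun i hi => by
    have hu := hfr.rootAt_mem_roots hi
    rw [← hgu i hi, show P = β • f + α • g from add_comm _ _]
    exact hgr.neg_one_pow_mul_eval_smul_add_smul_pos hglc hα (mem_roots'.1 hu).2 (hdisj _ hu) β
  obtain ⟨w, hw, hroots⟩ := roots_eq_map_range_of_sign_changes hdeg hlu hul fun i hi =>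
    mul_neg_of_neg_one_pow_succ_mul_pos (k := n - i - 1)
      (by rw [show n - i - 1 + 1 = n - i by omega]; exact hl i hi) (hr i hi)
  have hP : ∀ t, rootsAbove P t = #{i ∈ range n | t < w i} := fun t => by
    rw [rootsAbove, hroots, Multiset.countP_map]
    rfl
  refine ⟨?_, fun t => ⟨?_, ?_⟩⟩
  · have hcard : P.roots.card = n := by simp [hroots]
    exact hcard.trans (le_antisymm hdeg (hcard ▸ card_roots' P)).symm
  · rw [hP]
    exact (hgl t).trans (card_filter_lt_le_of_le_shift (k := 0) le_rfl
      (fun i hi => (hw i hi).1.le) t)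
  · rw [hP, hfr.rootsAbove_eq]
    exact card_filter_lt_le_of_le_shift (k := 0) le_rfl (fun i hi => (hw i hi).2.le) t

lemma realRooted_smul_add_smul_of_natDegree_eq (hfr : RealRooted f) (hgr : RealRooted g)
    (hflc : 0 < f.leadingCoeff) (hglc : 0 < g.leadingCoeff)
    (hdisj : ∀ x ∈ f.roots, x ∉ g.roots) (hα : 0 < α) (hβ : 0 < β)
    (hdeg : f.natDegree = g.natDegree)
    (h₁ : ∀ i < f.natDegree, rootAt g i ≤ rootAt f i)
    (h₂ : ∀ i, i + 1 < f.natDegree → rootAt f i ≤ rootAt g (i + 1)) :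
    RealRooted (α • g + β • f) ∧ RootsBetween g (α • g + β • f) f := by
  set n := f.natDegree
  have hu := hfr.monotoneOn_rootAt
  have hv := hgr.monotoneOn_rootAt
  rw [← hdeg] at hv
  have hvg : ∀ i < n, rootAt g i ∈ g.roots := fun i hi => hgr.rootAt_mem_roots (hdeg ▸ hi)
  have hvf : ∀ i < n, rootAt g i ∉ f.roots := fun i hi hf => hdisj _ hf (hvg i hi)
  have hvu : ∀ i < n, rootAt g i < rootAt f i := fun i hi =>
    (h₁ i hi).lt_of_ne fun h => hvf i hi (h ▸ hfr.rootAt_mem_roots hi)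
  have huv : ∀ i, i + 1 < n → rootAt f i < rootAt g (i + 1) := fun i hi =>
    (h₂ i hi).lt_of_ne fun h => hvf (i + 1) hi (h ▸ hfr.rootAt_mem_roots (by omega))
  refine realRooted_smul_add_smul_of_alternating hfr hgr hglc hdisj hα ?_ hvu huv
    (fun i hi => ?_) (fun i hi => ?_) (fun t => (hgr.rootsAbove_eq t).trans_le (by rw [← hdeg]))
  · exact (natDegree_add_le _ _).trans
      (max_le ((natDegree_smul_le _ _).trans hdeg.ge) (natDegree_smul_le _ _))
  · have := hfr.neg_one_pow_mul_eval_smul_add_smul_pos hflc hβ (mem_roots'.1 (hvg i hi)).2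
      (hvf i hi) α
    rwa [hfr.rootsAbove_eq, card_filter_lt_eq_sub (k := i)
      (fun j hj => (h₂ j (by omega)).trans (hv (by simp; omega) (by simp; omega) (by omega)))
      (fun j hij hj => (hvu i hi).trans_le (hu (by simpa using hi) (by simpa using hj) hij))]
      at this
  · rw [hgr.rootsAbove_eq, ← hdeg, card_filter_lt_eq_sub (k := i + 1)
      (fun j hj => (h₁ j (by omega)).trans (hu (by simp; omega) (by simpa using hi) (by omega)))
      (fun j hij hj => (huv i (by omega)).trans_le (hv (by simp; omega) (by simpa using hj) hij))]
    omega

lemma realRooted_smul_add_smul_of_natDegree_eq_succ (hfr : RealRooted f) (hgr : RealRooted g)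
    (hflc : 0 < f.leadingCoeff) (hglc : 0 < g.leadingCoeff)
    (hdisj : ∀ x ∈ f.roots, x ∉ g.roots) (hα : 0 < α) (hβ : 0 < β)
    (hdeg : f.natDegree = g.natDegree + 1)
    (h₁ : ∀ i < g.natDegree, rootAt f i ≤ rootAt g i)
    (h₂ : ∀ i, i + 1 < f.natDegree → rootAt g i ≤ rootAt f (i + 1)) :
    RealRooted (α • g + β • f) ∧ RootsBetween g (α • g + β • f) f := by
  set n := f.natDegree
  set m := g.natDegree
  have hu := hfr.monotoneOn_rootAt
  have hv := hgr.monotoneOn_rootAt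
  have hvg : ∀ i < m, rootAt g i ∈ g.roots := fun i hi => hgr.rootAt_mem_roots hi
  have hvf : ∀ i < m, rootAt g i ∉ f.roots := fun i hi hf => hdisj _ hf (hvg i hi)
  have huv : ∀ i < m, rootAt f i < rootAt g i := fun i hi =>
    (h₁ i hi).lt_of_ne fun h => hvf i hi (h ▸ hfr.rootAt_mem_roots (by omega))
  have hvu : ∀ i, i + 1 < n → rootAt g i < rootAt f (i + 1) := fun i hi =>
    (h₂ i hi).lt_of_ne fun h => hvf i (by omega) (h ▸ hfr.rootAt_mem_roots hi)
  have hPdeg : (α • g + β • f).natDegree = n := by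
    rw [natDegree_add_eq_right_of_natDegree_lt, natDegree_smul _ hβ.ne']
    rw [natDegree_smul _ hβ.ne']
    exact (natDegree_smul_le _ _).trans_lt (by omega)
  obtain ⟨T, hT, hPT⟩ := exists_lt_neg_one_pow_mul_eval_pos
    (leadingCoeff_smul_add_smul_pos hflc.le hglc hα hβ.le) (by omega) (rootAt f 0)
  rw [hPdeg] at hPT
  -- `T` stands in for a root of `g` below all the others
  refine realRooted_smul_add_smul_of_alternating
    (l := fun i => if i = 0 then T else rootAt g (i - 1)) hfr hgr hglc hdisj hα hPdeg.le
    (fun i hi => ?_) (fun i hi => by simpa using huv i (by omega)) (fun i hi => ?_)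
    (fun i hi => ?_) (fun t => ?_)
  · rcases i with _ | i
    · simpa using hT
    · simpa using hvu i hi
  · rcases i with _ | i
    · simpa using hPT
    have := hfr.neg_one_pow_mul_eval_smul_add_smul_pos hflc hβ
      (mem_roots'.1 (hvg i (by omega))).2 (hvf i (by omega)) α
    rwa [hfr.rootsAbove_eq, card_filter_lt_eq_sub (k := i + 1)
      (fun j hj => (h₁ j (by omega)).trans (hv (by simp; omega) (by simp; omega) (by omega)))
      (fun j hij hj =>
        (hvu i (by omega)).trans_le (hu (by simpa using hi) (by simpa using hj) hij))]
      at this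
  · rw [hgr.rootsAbove_eq, card_filter_lt_eq_sub (k := i)
      (fun j hj => (h₂ j (by omega)).trans (hu (by simp; omega) (by simpa using hi) (by omega)))
      (fun j hij hj => (huv i (by omega)).trans_le (hv (by simp; omega) (by simpa using hj) hij))]
    omega
  · rw [hgr.rootsAbove_eq]
    exact card_filter_lt_le_of_le_shift (k := 1) (by omega) (fun j _ => by simp) t

theorem Interlaces.realRooted_smul_add_smul_of_disjoint (h : Interlaces g f)
    (hflc : 0 < f.leadingCoeff) (hglc : 0 < g.leadingCoeff)
    (hdisj : ∀ x ∈ f.roots, x ∉ g.roots) (hα : 0 < α) (hβ : 0 < β) :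
    RealRooted (α • g + β • f) ∧ RootsBetween g (α • g + β • f) f := by
  obtain ⟨hfr, hgr, -, -, ⟨hdeg, h₁, h₂⟩ | ⟨hdeg, h₁, h₂⟩⟩ :=
    (h.resolve_left (leadingCoeff_ne_zero.1 hglc.ne')).resolve_left
      (leadingCoeff_ne_zero.1 hflc.ne')
  · exact realRooted_smul_add_smul_of_natDegree_eq hfr hgr hflc hglc hdisj hα hβ hdeg h₁ h₂
  · exact realRooted_smul_add_smul_of_natDegree_eq_succ hfr hgr hflc hglc hdisj hα hβ hdeg h₁ h₂

end Combination

section CommonRoots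

variable {f g : ℝ[X]}

lemma rootsAbove_prod_X_sub_C (s : Multiset ℝ) (t : ℝ) :
    rootsAbove (s.map fun a => X - C a).prod t = s.countP (t < ·) := by
  rw [rootsAbove, roots_multiset_prod_X_sub_C]

lemma realRooted_prod_X_sub_C (s : Multiset ℝ) : RealRooted (s.map fun a => X - C a).prod := by
  rw [RealRooted, roots_multiset_prod_X_sub_C, natDegree_multiset_prod_X_sub_C_eq_card]

lemma RealRooted.eq_smul_prod_sub_mul_prod_inter (hf : RealRooted f) (s : Multiset ℝ) :
    f = f.leadingCoeff • (((f.roots - s).map fun a => X - C a).prod *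
      ((f.roots ∩ s).map fun a => X - C a).prod) := by
  rw [← Multiset.prod_add, ← Multiset.map_add, Multiset.sub_add_inter, smul_eq_C_mul,
    C_leadingCoeff_mul_prod_multiset_X_sub_C hf]

lemma rootsAbove_eq_prod_sub_add (p : ℝ[X]) (s : Multiset ℝ) (t : ℝ) :
    rootsAbove p t = rootsAbove ((p.roots - s).map fun a => X - C a).prod t +
      (p.roots ∩ s).countP (t < ·) := by
  rw [rootsAbove_prod_X_sub_C, ← Multiset.countP_add, Multiset.sub_add_inter, rootsAbove]

lemma RealRooted.prod_X_sub_C_mul {p : ℝ[X]} (hp : RealRooted p) (hp₀ : p ≠ 0)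
    (s : Multiset ℝ) : RealRooted ((s.map fun a => X - C a).prod * p) ∧
      ∀ t, rootsAbove ((s.map fun a => X - C a).prod * p) t =
        s.countP (t < ·) + rootsAbove p t := by
  have hs₀ := (monic_multisetProd_X_sub_C s).ne_zero
  have hroots : ((s.map fun a => X - C a).prod * p).roots = s + p.roots := by
    rw [roots_mul (mul_ne_zero hs₀ hp₀), roots_multiset_prod_X_sub_C]
  refine ⟨?_, fun t => ?_⟩
  · rw [RealRooted, hroots, natDegree_mul hs₀ hp₀, Multiset.card_add, hp,
      natDegree_multiset_prod_X_sub_C_eq_card]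
  · rw [rootsAbove, hroots, Multiset.countP_add]
    rfl

lemma RootsInterlace.interlaces_prod_sub (h : RootsInterlace g f) :
    Interlaces ((g.roots - f.roots).map fun a => X - C a).prod
      ((f.roots - g.roots).map fun a => X - C a).prod := by
  refine (interlaces_iff_rootsInterlace (monic_multisetProd_X_sub_C _).ne_zero
    (monic_multisetProd_X_sub_C _).ne_zero).2 ⟨realRooted_prod_X_sub_C _,
      realRooted_prod_X_sub_C _, by simp [(monic_multisetProd_X_sub_C _).leadingCoeff],
      by simp [(monic_multisetProd_X_sub_C _).leadingCoeff], fun t => ?_⟩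
  have := h t
  rw [rootsAbove_eq_prod_sub_add f g.roots t, rootsAbove_eq_prod_sub_add g f.roots t,
    Multiset.inter_comm g.roots] at this
  omega

theorem RootsInterlace.realRooted_smul_add_smul (h : RootsInterlace g f)
    (hfr : RealRooted f) (hgr : RealRooted g) (hflc : 0 < f.leadingCoeff)
    (hglc : 0 < g.leadingCoeff) {α β : ℝ} (hα : 0 < α) (hβ : 0 < β) :
    RealRooted (α • g + β • f) ∧ RootsBetween g (α • g + β • f) f := by
  have hlc : ∀ s : Multiset ℝ, 0 < ((s.map fun a => X - C a).prod).leadingCoeff := fun s => by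
    simp [(monic_multisetProd_X_sub_C s).leadingCoeff]
  have hdisj : ∀ x ∈ ((f.roots - g.roots).map fun a => X - C a).prod.roots,
      x ∉ ((g.roots - f.roots).map fun a => X - C a).prod.roots := by
    simp only [roots_multiset_prod_X_sub_C, Multiset.mem_sub]
    omega
  obtain ⟨hPr, hPc⟩ := h.interlaces_prod_sub.realRooted_smul_add_smul_of_disjoint
    (α := α * g.leadingCoeff) (β := β * f.leadingCoeff) (hlc _) (hlc _) hdisj (by positivity)
    (by positivity)
  obtain ⟨hr, hcount⟩ := hPr.prod_X_sub_C_mul (leadingCoeff_ne_zero.1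
    (leadingCoeff_smul_add_smul_pos (hlc _).le (hlc _) (by positivity) (by positivity)).ne')
    (f.roots ∩ g.roots)
  have hP : α • g + β • f = ((f.roots ∩ g.roots).map fun a => X - C a).prod *
      ((α * g.leadingCoeff) • ((g.roots - f.roots).map fun a => X - C a).prod +
        (β * f.leadingCoeff) • ((f.roots - g.roots).map fun a => X - C a).prod) := by
    conv_lhs =>
      arg 1
      rw [hgr.eq_smul_prod_sub_mul_prod_inter f.roots, Multiset.inter_comm g.roots]
    conv_lhs =>
      arg 2
      rw [hfr.eq_smul_prod_sub_mul_prod_inter g.roots]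
    simp only [smul_eq_C_mul, C_mul]
    ring
  rw [hP]
  refine ⟨hr, fun t => ?_⟩
  have := hPc t
  rw [hcount, rootsAbove_eq_prod_sub_add f g.roots t, rootsAbove_eq_prod_sub_add g f.roots t,
    Multiset.inter_comm g.roots]
  omega

end CommonRoots

theorem Interlaces.smul_add_smul {f g : ℝ[X]} (h : Interlaces g f) (hflc : 0 < f.leadingCoeff)
    (hglc : 0 < g.leadingCoeff) {α β : ℝ} (hα : 0 ≤ α) (hβ : 0 ≤ β) :
    Interlaces g (α • g + β • f) ∧ Interlaces (α • g + β • f) f := by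
  have hf₀ := leadingCoeff_ne_zero.1 hflc.ne'
  have hg₀ := leadingCoeff_ne_zero.1 hglc.ne'
  obtain ⟨hfr, hgr, -, -, hfg⟩ := (interlaces_iff_rootsInterlace hf₀ hg₀).1 h
  rcases hα.eq_or_lt with rfl | hα
  · simp only [zero_smul, zero_add]
    exact ⟨by simpa using h.smul zero_le_one hβ,
      by simpa using (interlaces_self hfr hflc.le).smul hβ zero_le_one⟩
  rcases hβ.eq_or_lt with rfl | hβ
  · simp only [zero_smul, add_zero]
    exact ⟨by simpa using (interlaces_self hgr hglc.le).smul zero_le_one hα.le,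
      by simpa using h.smul hα.le zero_le_one⟩
  obtain ⟨hPr, hPc⟩ := hfg.realRooted_smul_add_smul hfr hgr hflc hglc hα hβ
  have hPlc := leadingCoeff_smul_add_smul_pos hflc.le hglc hα hβ.le
  have hP₀ := leadingCoeff_ne_zero.1 hPlc.ne'
  refine ⟨(interlaces_iff_rootsInterlace hP₀ hg₀).2 ⟨hPr, hgr, hPlc, hglc, fun t => ?_⟩,
    (interlaces_iff_rootsInterlace hf₀ hP₀).2 ⟨hfr, hPr, hflc, hPlc, fun t => ?_⟩⟩ <;>
  · have := hPc t
    have := hfg t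
    omega

theorem Interlaces.smul_add_smul_of_mul_le_mul {f g : ℝ[X]} (h : Interlaces g f)
    (hfr : RealRooted f) (hgr : RealRooted g) (hflc : 0 ≤ f.leadingCoeff)
    (hglc : 0 ≤ g.leadingCoeff) {a b c d : ℝ} (ha : 0 ≤ a) (hb : 0 ≤ b) (hc : 0 ≤ c)
    (hd : 0 ≤ d) (hdet : a * d ≤ b * c) : Interlaces (c • g + d • f) (a • g + b • f) := by
  rcases eq_or_ne g 0 with rfl | hg₀
  · simpa using (interlaces_self hfr hflc).smul hd hb
  rcases eq_or_ne f 0 with rfl | hf₀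
  · simpa using (interlaces_self hgr hglc).smul hc ha
  have hflc' := hflc.lt_of_ne' (leadingCoeff_ne_zero.2 hf₀)
  have hglc' := hglc.lt_of_ne' (leadingCoeff_ne_zero.2 hg₀)
  rcases hc.eq_or_lt with rfl | hc
  · rcases mul_eq_zero.1 (le_antisymm (by simpa using hdet) (mul_nonneg ha hd)) with rfl | rfl
    · simpa using (interlaces_self hfr hflc).smul hd hb
    · exact .inl (by simp)
  have hr := (h.smul_add_smul hflc' hglc' hc.le hd).2
  have hp : a • g + b • f = (a / c) • (c • g + d • f) + ((b * c - a * d) / c) • f := by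
    rw [smul_add, smul_smul, smul_smul, add_assoc, ← add_smul, div_mul_cancel₀ _ hc.ne']
    congr 2
    field_simp
    ring
  rw [hp]
  exact (hr.smul_add_smul hflc' (leadingCoeff_smul_add_smul_pos hflc hglc' hc hd)
    (by positivity) (div_nonneg (by linarith) hc.le)).1

theorem Interlaces.interlaces_X_mul {p r : ℝ[X]} (h : Interlaces r p)
    (hp : ∀ x ∈ p.roots, x ≤ 0) : Interlaces p (X * r) := by
  rcases eq_or_ne r 0 with rfl | hr₀
  · exact .inr (.inl (mul_zero X))
  rcases eq_or_ne p 0 with rfl | hp₀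
  · exact .inl rfl
  obtain ⟨hpr, hrr, hplc, hrlc, hrp⟩ := (interlaces_iff_rootsInterlace hp₀ hr₀).1 h
  have hXr₀ : X * r ≠ 0 := mul_ne_zero X_ne_zero hr₀
  have hroots : (X * r).roots = 0 ::ₘ r.roots := by
    rw [roots_mul hXr₀, roots_X, Multiset.singleton_add]
  refine (interlaces_iff_rootsInterlace hXr₀ hp₀).2 ⟨?_, hpr, ?_, hplc, fun t => ?_⟩
  · rw [RealRooted, hroots, Multiset.card_cons, hrr, natDegree_mul X_ne_zero hr₀, natDegree_X,
      add_comm]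
  · rwa [leadingCoeff_mul, leadingCoeff_X, one_mul]
  · have hXr : rootsAbove (X * r) t = rootsAbove r t + if t < 0 then 1 else 0 := by
      rw [rootsAbove, hroots, Multiset.countP_cons]
      rfl
    rw [hXr]
    have := hrp t
    split_ifs with ht
    · omega
    · have : rootsAbove p t = 0 := Multiset.countP_eq_zero.2 fun x hx =>
        not_lt.2 ((hp x hx).trans (not_lt.1 ht))
      omega

lemma NonnegCoeffs.smul_add_smul {f g : ℝ[X]} (hf : NonnegCoeffs f) (hg : NonnegCoeffs g)
    {a b : ℝ} (ha : 0 ≤ a) (hb : 0 ≤ b) : NonnegCoeffs (a • g + b • f) := fun k => by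
  simp only [coeff_add, coeff_smul, smul_eq_mul]
  exact add_nonneg (mul_nonneg ha (hg k)) (mul_nonneg hb (hf k))

lemma NonnegCoeffs.roots_nonpos {p : ℝ[X]} (hp : NonnegCoeffs p) : ∀ x ∈ p.roots, x ≤ 0 := by
  intro x hx
  by_contra! hx₀
  have hlc : 0 < p.leadingCoeff :=
    (hp _).lt_of_ne' (leadingCoeff_ne_zero.2 (ne_zero_of_mem_roots hx))
  have : 0 < p.eval x := by
    rw [eval_eq_sum_range]
    exact (mul_pos hlc (pow_pos hx₀ _)).trans_le (single_le_sum
      (fun i _ => mul_nonneg (hp i) (pow_pos hx₀ i).le) (self_mem_range_succ _))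
  exact this.ne' (isRoot_of_mem_roots hx)

theorem stmt5_general (a b c d : ℝ) (ha : 0 ≤ a) (hb : 0 ≤ b) (hc : 0 ≤ c) (hd : 0 ≤ d)
    (hdet : a * d ≤ b * c) (f g : Polynomial ℝ)
    (hfrr : RealRooted f) (hgrr : RealRooted g)
    (hfnn : NonnegCoeffs f) (hgnn : NonnegCoeffs g)
    (hint : Interlaces g f) :
    Interlaces (a • g + b • f) (X * (c • g + d • f)) :=
  (hint.smul_add_smul_of_mul_le_mul hfrr hgrr (hfnn _) (hgnn _) ha hb hc hd hdet).interlaces_X_mul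
    (hfnn.smul_add_smul hgnn ha hb).roots_nonpos

/-- if `a, b, c, d ≥ 0` with `ad ≤ bc` and `g ≼ f` for real-rooted
polynomials `f, g` with nonnegative coefficients, then
`a·g + b·f ≼ x·(c·g + d·f)` provided both are nonzero. -/
theorem stmt5 (a b c d : ℝ) (ha : 0 ≤ a) (hb : 0 ≤ b) (hc : 0 ≤ c) (hd : 0 ≤ d)
    (hdet : a * d ≤ b * c) (f g : Polynomial ℝ)
    (hfrr : RealRooted f) (hgrr : RealRooted g)
    (hfnn : NonnegCoeffs f) (hgnn : NonnegCoeffs g)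
    (hint : Interlaces g f)
    (h1 : a • g + b • f ≠ 0) (h2 : X * (c • g + d • f) ≠ 0) :
    Interlaces (a • g + b • f) (X * (c • g + d • f)) :=
  stmt5_general a b c d ha hb hc hd hdet f g hfrr hgrr hfnn hgnn hint
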